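/- Let x be a feasible half-integral Held–Karp solution whose weight-1/2 edges decompose into edge-disjoint triangles, and suppose some comb inequality is violated by x. Among all violated combs choose one with the minimum number of teeth t; then the support graph of x restricted to the handle H is connected. -/

import Mathlib

/-!
Suppose the handle `H` splits into nonempty parts `H₁`, `H₂` with no support edge between them.
Cuts of this half-integral solution are integers, so a violated comb has comb sum at most `3t`,
and together with the subtour bounds this makes every bound tight: each tooth `T` has
`x(δ(T)) = 2`, its inner part `T ∩ H` has cut `2` and sends weight `1` to `T \ H`, and
`x(δ(H)) = t`. An inner part meeting both `H₁` and `H₂` would have cut at least `2 + 2`, so each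
tooth meets only one part, and `Hₖ` receives at least as much weight as it has teeth; since the
two cuts add up to `x(δ(H)) = t`, `x(δ(Hₖ))` equals its number of teeth. That number is at least
`2` for both parts, and it is odd for one of them, which is then the handle of a violated comb
with fewer teeth. (A tooth equal to `V` forces `t = 1` and `x(δ(H)) < 4`, while a split handle
has cut at least `4`.)
-/

open Finset

variable {V : Type*} [Fintype V] [DecidableEq V]

/-- Total x-weight of edges leaving `S` (each crossing edge counted once, from inside to outside). -/
def cutVal (x : V → V → ℝ) (S : Finset V) : ℝ := ∑ i ∈ S, ∑ j ∈ Sᶜ, x i j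

/-- Total x-weight of edges between disjoint sets `A` and `B`. -/
def eVal (x : V → V → ℝ) (A B : Finset V) : ℝ := ∑ i ∈ A, ∑ j ∈ B, x i j

/-- The support graph of an edge weighting. -/
def support (x : V → V → ℝ) : SimpleGraph V where
  Adj i j := i ≠ j ∧ (0 < x i j ∨ 0 < x j i)
  symm := ⟨fun i j h => ⟨h.1.symm, h.2.symm⟩⟩
  loopless := ⟨fun i h => h.1 rfl⟩

/-- The weight-1/2 edges of `x` decompose into the edge-disjoint triangles `𝒯`. -/
def TriDecomp (x : V → V → ℝ) (𝒯 : Finset (Finset V)) : Prop :=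
  (∀ tr ∈ 𝒯, tr.card = 3) ∧
  (∀ tr ∈ 𝒯, ∀ i ∈ tr, ∀ j ∈ tr, i ≠ j → x i j = 1 / 2) ∧
  (∀ i j : V, i ≠ j → x i j = 1 / 2 → ∃! tr, tr ∈ 𝒯 ∧ i ∈ tr ∧ j ∈ tr)

/-- A comb inequality violated by : the handle  and teeth  form a comb and the comb
inequality fails. -/
def ViolatedComb (x : V → V → ℝ) (H : Finset V) {t : ℕ} (T : Fin t → Finset V) : Prop :=
  Odd t ∧ (∀ i j, i ≠ j → Disjoint (T i) (T j)) ∧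
  (∀ i, ((T i) ∩ H).Nonempty ∧ ((T i) \ H).Nonempty) ∧
  cutVal x H + ∑ i, cutVal x (T i) < 3 * (t : ℝ) + 1

section Cuts

variable {x : V → V → ℝ}

lemma eVal_mono {α : Type*} {x : α → α → ℝ} (hx : ∀ i j, 0 ≤ x i j) {A A' B B' : Finset α}
    (hA : A ⊆ A') (hB : B ⊆ B') : eVal x A B ≤ eVal x A' B' :=
  (sum_le_sum fun i _ => sum_le_sum_of_subset_of_nonneg hB fun j _ _ => hx i j).trans <|
    sum_le_sum_of_subset_of_nonneg hA fun i _ _ => sum_nonneg fun j _ => hx i j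

lemma eVal_union_left {α : Type*} [DecidableEq α] {x : α → α → ℝ} {A B : Finset α}
    (h : Disjoint A B) (C : Finset α) :
    eVal x (A ∪ B) C = eVal x A C + eVal x B C :=
  sum_union h

lemma eVal_union_right {α : Type*} [DecidableEq α] {x : α → α → ℝ} (A : Finset α)
    {B C : Finset α} (h : Disjoint B C) :
    eVal x A (B ∪ C) = eVal x A B + eVal x A C := by
  simp only [eVal, sum_union h, sum_add_distrib]

lemma eVal_comm {α : Type*} {x : α → α → ℝ} (hsym : ∀ i j, x i j = x j i) (A B : Finset α) :
    eVal x A B = eVal x B A := by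
  rw [eVal, sum_comm]
  simp only [eVal, hsym]

lemma cutVal_eq_sum_sub_eVal (S : Finset V) :
    cutVal x S = ∑ i ∈ S, ∑ j, x i j - eVal x S S := by
  rw [cutVal, eVal, ← sum_sub_distrib]
  refine sum_congr rfl fun i _ => ?_
  rw [← sum_add_sum_compl S]
  ring

lemma cutVal_singleton (v : V) : cutVal x {v} = ∑ j, x v j - x v v := by
  simp [cutVal_eq_sum_sub_eVal, eVal]

lemma cutVal_union (hsym : ∀ i j, x i j = x j i) {A B : Finset V} (h : Disjoint A B) :
    cutVal x (A ∪ B) + 2 * eVal x A B = cutVal x A + cutVal x B := by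
  rw [cutVal_eq_sum_sub_eVal, cutVal_eq_sum_sub_eVal, cutVal_eq_sum_sub_eVal, sum_union h,
    eVal_union_left h, eVal_union_right _ h, eVal_union_right _ h, eVal_comm hsym B A]
  ring

lemma cutVal_union_of_forall_eq_zero (hsym : ∀ i j, x i j = x j i) {A B : Finset V}
    (h : Disjoint A B) (h0 : ∀ i ∈ A, ∀ j ∈ B, x i j = 0) :
    cutVal x (A ∪ B) = cutVal x A + cutVal x B := by
  have hAB : eVal x A B = 0 := sum_eq_zero fun i hi => sum_eq_zero fun j hj => h0 i hi j hj
  linarith [cutVal_union hsym h]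

/-- Adding a vertex `v` to `S` changes the cut by `x(δ(v)) - 2 x(v, S)`, and `2 x(v, S)` is an
integer. -/
lemma cutVal_isInt (hsym : ∀ i j, x i j = x j i) (hhalf : ∀ i j, ∃ k : ℤ, 2 * x i j = k)
    (hdeg : ∀ v, ∃ k : ℤ, cutVal x {v} = k) (S : Finset V) : ∃ k : ℤ, cutVal x S = k := by
  induction S using Finset.induction_on with
  | empty => exact ⟨0, by simp [cutVal]⟩
  | insert v S hv ih =>
    obtain ⟨k, hk⟩ := ih
    obtain ⟨d, hd⟩ := hdeg v
    choose m hm using hhalf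
    have hunion := cutVal_union hsym (disjoint_singleton_left.2 hv)
    have hedge : 2 * eVal x {v} S = ∑ j ∈ S, (m v j : ℝ) := by
      simp [eVal, mul_sum, hm]
    refine ⟨d + k - ∑ j ∈ S, m v j, ?_⟩
    rw [insert_eq]
    push_cast
    linarith

lemma sum_eVal_le_cutVal (hx : ∀ i j, 0 ≤ x i j) {ι : Type*} [DecidableEq ι] (s : Finset ι)
    (A B : ι → Finset V) (S : Finset V) (hd : (s : Set ι).PairwiseDisjoint A)
    (hA : ∀ i ∈ s, A i ⊆ S) (hB : ∀ i ∈ s, Disjoint (B i) S) :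
    ∑ i ∈ s, eVal x (A i) (B i) ≤ cutVal x S :=
  calc ∑ i ∈ s, eVal x (A i) (B i) ≤ ∑ i ∈ s, eVal x (A i) Sᶜ :=
        sum_le_sum fun i hi =>
          eVal_mono hx Subset.rfl (subset_compl_iff_disjoint_right.2 (hB i hi))
    _ = eVal x (s.biUnion A) Sᶜ := (sum_biUnion hd).symm
    _ ≤ cutVal x S := eVal_mono hx (biUnion_subset.2 hA) Subset.rfl

end Cuts

lemma SimpleGraph.exists_split_of_not_connected_induce {α : Type*} [DecidableEq α]
    {G : SimpleGraph α} {H : Finset α} (hH : H.Nonempty) (hG : ¬ (G.induce (H : Set α)).Connected) :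
    ∃ H₁ H₂ : Finset α, Disjoint H₁ H₂ ∧ H₁ ∪ H₂ = H ∧ H₁.Nonempty ∧ H₂.Nonempty ∧
      ∀ i ∈ H₁, ∀ j ∈ H₂, ¬ G.Adj i j := by
  classical
  obtain ⟨a, b, hab⟩ : ∃ a b, ¬ (G.induce (H : Set α)).Reachable a b := by
    by_contra! h
    obtain ⟨v, hv⟩ := hH
    exact hG ((SimpleGraph.connected_iff _).2 ⟨h, ⟨⟨v, hv⟩⟩⟩)
  let H₁ := H.filter fun v => ∃ hv : v ∈ H, (G.induce (H : Set α)).Reachable a ⟨v, hv⟩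
  have hmem : ∀ v (hv : v ∈ H), v ∈ H₁ ↔ (G.induce (H : Set α)).Reachable a ⟨v, hv⟩ :=
    fun v hv => by simp [H₁, hv]
  refine ⟨H₁, H \ H₁, disjoint_sdiff, union_sdiff_of_subset (filter_subset _ _),
    ⟨a, (hmem a a.2).2 .rfl⟩, ⟨b, mem_sdiff.2 ⟨b.2, fun hb => hab ((hmem b b.2).1 hb)⟩⟩, ?_⟩
  intro i hi j hj hij
  obtain ⟨hjH, hj₁⟩ := mem_sdiff.1 hj
  have hiH : i ∈ H := filter_subset _ _ hi
  have hadj : (G.induce (H : Set α)).Adj ⟨i, hiH⟩ ⟨j, hjH⟩ := hij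
  exact hj₁ ((hmem j hjH).2 (((hmem i hiH).1 hi).trans hadj.reachable))

lemma eq_zero_of_not_support_adj {α : Type*} {x : α → α → ℝ} (hx : ∀ i j, 0 ≤ x i j) {i j : α}
    (hij : i ≠ j) (h : ¬ (support x).Adj i j) : x i j = 0 :=
  (hx i j).antisymm' (not_lt.1 fun hpos => h ⟨hij, Or.inl hpos⟩)

lemma subset_or_subset_of_cutVal_lt_four {x : V → V → ℝ} (hsym : ∀ i j, x i j = x j i)
    (hsub : ∀ S : Finset V, S.Nonempty → S ≠ univ → 2 ≤ cutVal x S) {H₁ H₂ S : Finset V}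
    (hd : Disjoint H₁ H₂) (h0 : ∀ i ∈ H₁, ∀ j ∈ H₂, x i j = 0) (hU : H₁ ∪ H₂ ≠ univ)
    (hS : S ⊆ H₁ ∪ H₂) (hcut : cutVal x S < 4) : S ⊆ H₁ ∨ S ⊆ H₂ := by
  by_contra! h
  obtain ⟨u, huS, hu₁⟩ := not_subset.1 h.1
  obtain ⟨w, hwS, hw₂⟩ := not_subset.1 h.2
  have hproper : S ≠ univ := ne_top_of_le_ne_top hU hS
  have h₂ : 2 ≤ cutVal x (S ∩ H₂) := hsub _
    ⟨u, mem_inter.2 ⟨huS, (mem_union.1 (hS huS)).resolve_left hu₁⟩⟩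
    (ne_top_of_le_ne_top hproper inter_subset_left)
  have h₁ : 2 ≤ cutVal x (S ∩ H₁) := hsub _
    ⟨w, mem_inter.2 ⟨hwS, (mem_union.1 (hS hwS)).resolve_right hw₂⟩⟩
    (ne_top_of_le_ne_top hproper inter_subset_left)
  have hsplit := cutVal_union_of_forall_eq_zero hsym
    (hd.mono (inter_subset_right (s₁ := S)) (inter_subset_right (s₁ := S)))
    fun i hi j hj => h0 i (mem_inter.1 hi).2 j (mem_inter.1 hj).2
  rw [← inter_union_distrib_left, inter_eq_left.2 hS] at hsplit
  linarith

namespace ViolatedComb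

variable {x : V → V → ℝ} {H : Finset V} {t : ℕ} {T : Fin t → Finset V}

lemma handle_nonempty (hv : ViolatedComb x H T) : H.Nonempty :=
  let ⟨v, hvH⟩ := (hv.2.2.1 ⟨0, hv.1.pos⟩).1
  ⟨v, (mem_inter.1 hvH).2⟩

lemma handle_ne_univ (hv : ViolatedComb x H T) : H ≠ univ := by
  obtain ⟨v, hv⟩ := (hv.2.2.1 ⟨0, hv.1.pos⟩).2
  rintro rfl
  simp at hv

lemma cutVal_handle_lt_four_of_tooth_eq_univ (hv : ViolatedComb x H T) {i : Fin t}
    (hi : T i = univ) : cutVal x H < 4 := by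
  obtain ⟨hodd, hdisj, hmeet, hlt⟩ := hv
  have hsingle : ∀ j, j = i := fun j => by
    by_contra hj
    obtain ⟨v, hv⟩ := (hmeet j).1
    exact disjoint_left.1 (hdisj j i hj) (mem_inter.1 hv).1 (hi ▸ mem_univ v)
  have ht : t = 1 := le_antisymm
    (by simpa using Fintype.card_le_one_iff.2 fun a b => (hsingle a).trans (hsingle b).symm)
    hodd.pos
  subst ht
  have hV : cutVal x univ = 0 := by simp [cutVal]
  rw [Fin.sum_univ_one, hsingle 0, hi, hV] at hlt
  norm_num at hlt
  linarith

/-- Each tooth satisfies `x(δ(T)) + 2 x(T ∩ H, T \ H) = x(δ(T ∩ H)) + x(δ(T \ H)) ≥ 4`, the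
crossing weights sum to at most `x(δ(H))`, and by integrality the comb sum is at most `3t`;
together these leave no slack anywhere. -/
lemma tight (hsym : ∀ i j, x i j = x j i) (hx : ∀ i j, 0 ≤ x i j)
    (hsub : ∀ S : Finset V, S.Nonempty → S ≠ univ → 2 ≤ cutVal x S)
    (hint : ∀ S : Finset V, ∃ k : ℤ, cutVal x S = k) (hv : ViolatedComb x H T)
    (hU : ∀ i, T i ≠ univ) :
    cutVal x H = t ∧ ∀ i, cutVal x (T i) = 2 ∧ cutVal x (T i ∩ H) = 2 ∧
      eVal x (T i ∩ H) (T i \ H) = 1 := by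
  have hHU := hv.handle_ne_univ
  obtain ⟨-, hdisj, hmeet, hlt⟩ := hv
  have hA : ∀ i, 2 ≤ cutVal x (T i ∩ H) := fun i =>
    hsub _ (hmeet i).1 (ne_top_of_le_ne_top hHU inter_subset_right)
  have hB : ∀ i, 2 ≤ cutVal x (T i \ H) := fun i => hsub _ (hmeet i).2 fun h => by
    obtain ⟨v, hv⟩ := (hmeet i).1
    exact (mem_sdiff.1 (h ▸ mem_univ v)).2 (mem_inter.1 hv).2
  have hT : ∀ i, 2 ≤ cutVal x (T i) := fun i =>
    hsub _ ((hmeet i).1.mono inter_subset_left) (hU i)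
  have htooth : ∀ i, cutVal x (T i) + 2 * eVal x (T i ∩ H) (T i \ H) =
      cutVal x (T i ∩ H) + cutVal x (T i \ H) := fun i => by
    have := cutVal_union hsym (disjoint_sdiff_inter (T i) H).symm
    rwa [union_comm, sdiff_union_inter] at this
  have hedges : ∑ i, eVal x (T i ∩ H) (T i \ H) ≤ cutVal x H :=
    sum_eVal_le_cutVal hx _ _ _ _
      (fun i _ j _ hij => (hdisj i j hij).mono inter_subset_left inter_subset_left)
      (fun _ _ => inter_subset_right) (fun _ _ => sdiff_disjoint)
  have hcomb : cutVal x H + ∑ i, cutVal x (T i) ≤ 3 * t := by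
    choose k hk using hint
    have hk' : cutVal x H + ∑ i, cutVal x (T i) = ((k H + ∑ i, k (T i) : ℤ) : ℝ) := by
      simp [hk]
    rw [hk'] at hlt ⊢
    exact_mod_cast Int.le_of_lt_add_one (by exact_mod_cast hlt)
  let slack i := (cutVal x (T i) - 2) + (cutVal x (T i ∩ H) - 2) + (cutVal x (T i \ H) - 2)
  have hslack : ∀ i, slack i = 0 := by
    have hsum : ∑ i, slack i =
        2 * ∑ i, cutVal x (T i) + 2 * ∑ i, eVal x (T i ∩ H) (T i \ H) - 6 * t := by
      rw [sum_congr rfl fun i _ => show slack i = 2 * cutVal x (T i) +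
        2 * eVal x (T i ∩ H) (T i \ H) - 6 by linarith [htooth i]]
      simp [sum_add_distrib, sum_sub_distrib, mul_sum]
      ring
    have hnonneg : ∀ i ∈ univ, 0 ≤ slack i := fun i _ => by linarith [hT i, hA i, hB i]
    exact fun i => (sum_eq_zero_iff_of_nonneg hnonneg).1
      ((le_antisymm (by linarith) (sum_nonneg hnonneg))) i (mem_univ i)
  simp only [slack] at hslack
  have hTi : ∀ i, cutVal x (T i) = 2 := fun i => by linarith [hslack i, hT i, hA i, hB i]
  have hAi : ∀ i, cutVal x (T i ∩ H) = 2 := fun i => by linarith [hslack i, hT i, hA i, hB i]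
  have hei : ∀ i, eVal x (T i ∩ H) (T i \ H) = 1 := fun i => by
    linarith [hslack i, htooth i, hTi i, hAi i, hB i]
  refine ⟨?_, fun i => ⟨hTi i, hAi i, hei i⟩⟩
  simp only [hTi, hei, sum_const, card_univ, Fintype.card_fin, nsmul_eq_mul] at hcomb hedges
  linarith

lemma of_subfamily (hdisj : ∀ i j, i ≠ j → Disjoint (T i) (T j)) {H' : Finset V}
    {β : Finset (Fin t)} (hodd : Odd #β)
    (hmeet : ∀ i ∈ β, (T i ∩ H').Nonempty ∧ (T i \ H').Nonempty)
    (hlt : cutVal x H' + ∑ i ∈ β, cutVal x (T i) < 3 * #β + 1) :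
    ViolatedComb x H' fun k => T (β.equivFin.symm k) := by
  refine ⟨hodd,
    fun k l hkl => hdisj _ _ fun h => hkl (β.equivFin.symm.injective (Subtype.ext h)),
    fun k => hmeet _ (β.equivFin.symm k).2, ?_⟩
  rwa [Equiv.sum_comp β.equivFin.symm fun i => cutVal x (T i),
    sum_coe_sort β fun i => cutVal x (T i)]

lemma card_teeth_le_cutVal (hx : ∀ i j, 0 ≤ x i j)
    (hdisj : ∀ i j, i ≠ j → Disjoint (T i) (T j)) (he : ∀ i, eVal x (T i ∩ H) (T i \ H) = 1)
    {S : Finset V} (hS : S ⊆ H) :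
    (#{i | T i ∩ H ⊆ S} : ℝ) ≤ cutVal x S :=
  calc (#{i | T i ∩ H ⊆ S} : ℝ)
      = ∑ i ∈ {i | T i ∩ H ⊆ S}, eVal x (T i ∩ H) (T i \ H) := by simp [he]
    _ ≤ cutVal x S := sum_eVal_le_cutVal hx _ _ _ _
      (fun i _ j _ hij => (hdisj i j hij).mono inter_subset_left inter_subset_left)
      (fun i hi => (mem_filter.1 hi).2)
      (fun _ _ => disjoint_of_subset_right hS sdiff_disjoint)

lemma not_odd_card_teeth_of_cutVal_eq
    (hmin : ∀ t' : ℕ, t' < t → ∀ H' : Finset V, ∀ T' : Fin t' → Finset V,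
      ¬ ViolatedComb x H' T')
    (hv : ViolatedComb x H T) (hT : ∀ i, cutVal x (T i) = 2) {S : Finset V} (hS : S ⊆ H)
    (hcut : cutVal x S = #{i | T i ∩ H ⊆ S})
    (hlt : #{i | T i ∩ H ⊆ S} < t) :
    ¬ Odd #{i | T i ∩ H ⊆ S} := by
  intro hodd
  refine hmin _ hlt S _ (of_subfamily hv.2.1 hodd (fun i hi => ⟨?_, ?_⟩) ?_)
  · exact (hv.2.2.1 i).1.mono (subset_inter inter_subset_left (mem_filter.1 hi).2)
  · exact (hv.2.2.1 i).2.mono (sdiff_subset_sdiff Subset.rfl hS)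
  · rw [sum_congr rfl fun i _ => hT i, hcut, sum_const, nsmul_eq_mul]
    linarith

lemma card_teeth_add_card_teeth (hsym : ∀ i j, x i j = x j i)
    (hsub : ∀ S : Finset V, S.Nonempty → S ≠ univ → 2 ≤ cutVal x S) (hv : ViolatedComb x H T)
    (hA : ∀ i, cutVal x (T i ∩ H) = 2) {H₁ H₂ : Finset V} (hd : Disjoint H₁ H₂)
    (hH : H₁ ∪ H₂ = H) (h0 : ∀ i ∈ H₁, ∀ j ∈ H₂, x i j = 0) :
    #{i | T i ∩ H ⊆ H₁} + #{i | T i ∩ H ⊆ H₂} = t := by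
  have hside : ∀ i, T i ∩ H ⊆ H₂ ↔ ¬ T i ∩ H ⊆ H₁ := fun i => by
    obtain ⟨v, hvA⟩ := (hv.2.2.1 i).1
    have hcutA : cutVal x (T i ∩ H) < 4 := by
      rw [hA i]
      norm_num
    exact ⟨fun h₂ h₁ => disjoint_left.1 hd (h₁ hvA) (h₂ hvA), (subset_or_subset_of_cutVal_lt_four
      hsym hsub hd h0 (hH ▸ hv.handle_ne_univ) (hH ▸ inter_subset_right) hcutA).resolve_left⟩
  rw [filter_congr fun i _ => hside i, card_filter_add_card_filter_not, card_univ,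
    Fintype.card_fin]

lemma not_split (hsym : ∀ i j, x i j = x j i) (hx : ∀ i j, 0 ≤ x i j)
    (hsub : ∀ S : Finset V, S.Nonempty → S ≠ univ → 2 ≤ cutVal x S)
    (hint : ∀ S : Finset V, ∃ k : ℤ, cutVal x S = k)
    (hmin : ∀ t' : ℕ, t' < t → ∀ H' : Finset V, ∀ T' : Fin t' → Finset V,
      ¬ ViolatedComb x H' T')
    (hv : ViolatedComb x H T) (hU : ∀ i, T i ≠ univ) {H₁ H₂ : Finset V} (hd : Disjoint H₁ H₂)
    (hH : H₁ ∪ H₂ = H) (hne₁ : H₁.Nonempty) (hne₂ : H₂.Nonempty)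
    (h0 : ∀ i ∈ H₁, ∀ j ∈ H₂, x i j = 0) : False := by
  obtain ⟨hcutH, htooth⟩ := hv.tight hsym hx hsub hint hU
  have hHU := hv.handle_ne_univ
  have hcard := card_teeth_add_card_teeth hsym hsub hv (fun i => (htooth i).2.1) hd hH h0
  have hcut : cutVal x H₁ + cutVal x H₂ = t := by
    rw [← cutVal_union_of_forall_eq_zero hsym hd h0, hH, hcutH]
  have hsub₁ : H₁ ⊆ H := hH ▸ subset_union_left
  have hsub₂ : H₂ ⊆ H := hH ▸ subset_union_right
  have hle₁ := card_teeth_le_cutVal hx hv.2.1 (fun i => (htooth i).2.2) hsub₁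
  have hle₂ := card_teeth_le_cutVal hx hv.2.1 (fun i => (htooth i).2.2) hsub₂
  have h2₁ := hsub H₁ hne₁ (ne_top_of_le_ne_top hHU hsub₁)
  have h2₂ := hsub H₂ hne₂ (ne_top_of_le_ne_top hHU hsub₂)
  have hcard' := congrArg (Nat.cast : ℕ → ℝ) hcard
  push_cast at hcard'
  have hlt₁ : #{i | T i ∩ H ⊆ H₁} < t := by
    have : (#{i | T i ∩ H ⊆ H₁} : ℝ) < t := by linarith
    exact_mod_cast this
  have hlt₂ : #{i | T i ∩ H ⊆ H₂} < t := by
    have : (#{i | T i ∩ H ⊆ H₂} : ℝ) < t := by linarith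
    exact_mod_cast this
  have hodd : Odd (_ + _) := hcard ▸ hv.1
  rcases Nat.even_or_odd #{i | T i ∩ H ⊆ H₁} with h | h
  · exact not_odd_card_teeth_of_cutVal_eq hmin hv (fun i => (htooth i).1) hsub₂ (by linarith)
      hlt₂ ((Nat.odd_add'.1 hodd).2 h)
  · exact not_odd_card_teeth_of_cutVal_eq hmin hv (fun i => (htooth i).1) hsub₁ (by linarith)
      hlt₁ h

end ViolatedComb

theorem minimal_violated_comb_handle_connected_general
    (x : V → V → ℝ)
    (hsym : ∀ i j, x i j = x j i)
    (hdiag : ∀ i, x i i = 0)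
    (hval : ∀ i j, x i j = 0 ∨ x i j = 1 / 2 ∨ x i j = 1)
    (hdeg : ∀ i : V, ∑ j, x i j = 2)
    (hsub : ∀ S : Finset V, S.Nonempty → S ≠ Finset.univ → 2 ≤ cutVal x S)
    (H : Finset V) (t : ℕ) (T : Fin t → Finset V)
    (hviol : ViolatedComb x H T)
    (hmin : ∀ t' : ℕ, t' < t → ∀ H' : Finset V, ∀ T' : Fin t' → Finset V,
      ¬ ViolatedComb x H' T') :
    ((support x).induce ((H : Finset V) : Set V)).Connected := by
  have hx : ∀ i j, 0 ≤ x i j := fun i j => by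
    rcases hval i j with h | h | h <;> rw [h] <;> norm_num
  have hint : ∀ S : Finset V, ∃ k : ℤ, cutVal x S = k := by
    refine cutVal_isInt hsym (fun i j => ?_)
      fun v => ⟨2, by simp [cutVal_singleton, hdeg, hdiag]⟩
    rcases hval i j with h | h | h
    exacts [⟨0, by simp [h]⟩, ⟨1, by simp [h]⟩, ⟨2, by simp [h]⟩]
  by_contra hcon
  obtain ⟨H₁, H₂, hd, hH, hne₁, hne₂, hnadj⟩ :=
    SimpleGraph.exists_split_of_not_connected_induce hviol.handle_nonempty hcon
  have h0 : ∀ i ∈ H₁, ∀ j ∈ H₂, x i j = 0 := fun i hi j hj =>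
    eq_zero_of_not_support_adj hx (fun h => disjoint_left.1 hd hi (h ▸ hj)) (hnadj i hi j hj)
  by_cases hU : ∃ i, T i = univ
  · obtain ⟨i, hi⟩ := hU
    have hHU := hviol.handle_ne_univ
    have hcut := cutVal_union_of_forall_eq_zero hsym hd h0
    rw [hH] at hcut
    linarith [hviol.cutVal_handle_lt_four_of_tooth_eq_univ hi,
      hsub H₁ hne₁ (ne_top_of_le_ne_top hHU (hH ▸ subset_union_left)),
      hsub H₂ hne₂ (ne_top_of_le_ne_top hHU (hH ▸ subset_union_right))]
  · exact hviol.not_split hsym hx hsub hint hmin (not_exists.1 hU) hd hH hne₁ hne₂ h0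

/-- In a violated comb with the minimum number of teeth, the support graph restricted to the
handle is connected. -/
theorem minimal_violated_comb_handle_connected
    (x : V → V → ℝ)
    (hsym : ∀ i j, x i j = x j i)
    (hdiag : ∀ i, x i i = 0)
    (hval : ∀ i j, x i j = 0 ∨ x i j = 1 / 2 ∨ x i j = 1)
    (hdeg : ∀ i : V, ∑ j, x i j = 2)
    (hsub : ∀ S : Finset V, S.Nonempty → S ≠ Finset.univ → 2 ≤ cutVal x S)
    (𝒯 : Finset (Finset V)) (htri : TriDecomp x 𝒯)
    (H : Finset V) (t : ℕ) (T : Fin t → Finset V)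
    (hviol : ViolatedComb x H T)
    (hmin : ∀ t' : ℕ, t' < t → ∀ H' : Finset V, ∀ T' : Fin t' → Finset V,
      ¬ ViolatedComb x H' T') :
    ((support x).induce ((H : Finset V) : Set V)).Connected :=
  minimal_violated_comb_handle_connected_general x hsym hdiag hval hdeg hsub H t T hviol hmin
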